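/- arXiv:1304.2132 — 2 statements merged into one kernel-verified Lean document; each statement's English description precedes it below -/
import Mathlib

section
/- Let C_n be the cycle graph on n > 2 vertices and Δ(s) = s²(D − I) − sA + I its deformed Laplacian. Then for every real s, det(Δ(s)) = s^{2n} − 2s^n + 1 = (s^n − 1)². -/
open Matrix Filter

/-!
Let `P` be the permutation matrix of the rotation `i ↦ i + 1` of `Fin n`. The adjacency matrix of
`C_n` is `P + Pᵀ`; since `P Pᵀ = 1` and every vertex has degree `2`, the deformed Laplacian factors
as `Δ(s) = (1 - sP)(1 - sPᵀ)`. In the Leibniz expansion of `det (1 - sP)` a permutation contributes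
only if it moves each `i` to `i` or to `i + 1`, and since the rotation is a single cycle the only such
permutations are the identity and the rotation itself; so `det (1 - sP) = 1 - sⁿ`.
-/

/-- The degree matrix of a graph given by its adjacency matrix: the diagonal matrix of
row sums of `A`. -/
noncomputable def degMat {V : Type} [Fintype V] [DecidableEq V] (A : Matrix V V ℝ) :
    Matrix V V ℝ :=
  Matrix.diagonal fun i => ∑ j, A i j

/-- The deformed Laplacian `Δ(s) = s²(D − I) − sA + I`. -/
noncomputable def defLap {V : Type} [Fintype V] [DecidableEq V] (A : Matrix V V ℝ) (s : ℝ) :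
    Matrix V V ℝ :=
  s ^ 2 • (degMat A - 1) - s • A + 1

/-- Adjacency matrix of the cycle graph `C_n` on vertices `0,…,n−1` (mod `n`):
`i` and `j` are adjacent iff `i − j ≡ ±1 (mod n)`. -/
noncomputable def cycAdj (n : ℕ) : Matrix (Fin n) (Fin n) ℝ :=
  fun i j => if ((i : ℕ) + 1) % n = (j : ℕ) ∨ ((j : ℕ) + 1) % n = (i : ℕ) then 1 else 0

open Equiv

theorem Equiv.Perm.IsCycle.eq_one_or_eq_of_forall_apply_eq_or {α : Type*} [Finite α]
    {c σ : Perm α} (hc : c.IsCycle) (hσ : ∀ i, σ i = i ∨ σ i = c i) : σ = 1 ∨ σ = c := by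
  by_contra! h
  obtain ⟨x, hx⟩ : ∃ x, σ x ≠ x := by
    by_contra! hfix
    exact h.1 (Perm.ext hfix)
  obtain ⟨y, hy⟩ : ∃ y, σ y ≠ c y := by
    by_contra! hfollow
    exact h.2 (Perm.ext hfollow)
  have hxc : σ x = c x := (hσ x).resolve_left hx
  have hyc : σ y = y := (hσ y).resolve_right hy
  -- where `σ` follows `c`, it cannot fix the next point (injectivity), so it follows `c` there too
  have follows : ∀ k : ℕ, σ ((c ^ k) x) = c ((c ^ k) x) ∧ c ((c ^ k) x) ≠ (c ^ k) x := by
    intro k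
    induction k with
    | zero => exact ⟨hxc, hxc ▸ hx⟩
    | succ k ih =>
      rw [pow_succ', Perm.mul_apply]
      refine ⟨(hσ _).resolve_left fun hfix => ih.2 (σ.injective (hfix.trans ih.1.symm)), ?_⟩
      exact fun h' => ih.2 (c.injective h')
  obtain ⟨k, rfl⟩ := hc.exists_pow_eq (hxc ▸ hx) (hyc ▸ hy.symm)
  exact hy (follows k).1

namespace Matrix

variable {ι R : Type*} [Fintype ι] [DecidableEq ι] [CommRing R]

theorem det_eq_prod_diag_add_sign_mul_prod_of_isCycle {c : Perm ι} (hc : c.IsCycle)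
    (M : Matrix ι ι R) (hM : ∀ i j, j ≠ i → j ≠ c i → M i j = 0) :
    M.det = ∏ i, M i i + Perm.sign c * ∏ i, M i (c i) := by
  rw [← det_transpose, det_apply', Fintype.sum_eq_add 1 c hc.ne_one.symm]
  · simp
  rintro σ ⟨hσ1, hσc⟩
  obtain ⟨i, hσi, hσci⟩ : ∃ i, σ i ≠ i ∧ σ i ≠ c i := by
    by_contra! hσ
    exact (hc.eq_one_or_eq_of_forall_apply_eq_or fun i => or_iff_not_imp_left.mpr (hσ i)).elim
      hσ1 hσc
  simp only [transpose_apply]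
  rw [Finset.prod_eq_zero (Finset.mem_univ i) (hM i (σ i) hσi hσci), mul_zero]

theorem det_one_sub_smul_permMatrix_of_isCycle {c : Perm ι} (hc : c.IsCycle)
    (hsupp : c.support = Finset.univ) (s : R) :
    (1 - s • c.permMatrix R).det = 1 - s ^ Fintype.card ι := by
  have hmoved : ∀ i, c i ≠ i := fun i => Perm.mem_support.mp (hsupp ▸ Finset.mem_univ i)
  rw [det_eq_prod_diag_add_sign_mul_prod_of_isCycle hc]
  · simp [hmoved, one_apply_ne (hmoved _).symm, hc.sign, hsupp, ← mul_pow, sub_eq_add_neg]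
  · intro i j hji hjc
    simp [Ne.symm hji, Ne.symm hjc]

theorem sum_permMatrix_apply {R : Type*} [AddCommMonoidWithOne R] (σ : Perm ι) (i : ι) :
    ∑ j, σ.permMatrix R i j = 1 := by
  simp [PEquiv.toMatrix_apply]

end Matrix

section permMatrix

variable {V : Type} [Fintype V] [DecidableEq V]

theorem degMat_permMatrix_add_transpose (σ : Perm V) :
    degMat (σ.permMatrix ℝ + (σ.permMatrix ℝ)ᵀ) = 2 := by
  rw [transpose_permMatrix, degMat, ← diagonal_ofNat]
  congr! with i
  simp only [Matrix.add_apply, Finset.sum_add_distrib, sum_permMatrix_apply]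
  norm_num

theorem defLap_permMatrix_add_transpose (σ : Perm V) (s : ℝ) :
    defLap (σ.permMatrix ℝ + (σ.permMatrix ℝ)ᵀ) s =
      (1 - s • σ.permMatrix ℝ) * (1 - s • (σ.permMatrix ℝ)ᵀ) := by
  have horth : σ.permMatrix ℝ * (σ.permMatrix ℝ)ᵀ = 1 := by
    rw [transpose_permMatrix, ← permMatrix_mul, inv_mul_cancel, permMatrix_one]
  rw [defLap, degMat_permMatrix_add_transpose, show (2 : Matrix V V ℝ) - 1 = 1 by norm_num]
  simp only [mul_sub, sub_mul, one_mul, mul_one, smul_mul_smul_comm, horth]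
  module

theorem det_defLap_permMatrix_add_transpose (σ : Perm V) (s : ℝ) :
    (defLap (σ.permMatrix ℝ + (σ.permMatrix ℝ)ᵀ) s).det = (1 - s • σ.permMatrix ℝ).det ^ 2 := by
  rw [defLap_permMatrix_add_transpose, det_mul, ← det_transpose (1 - s • σ.permMatrix ℝ),
    transpose_sub, transpose_smul, transpose_one, sq]

end permMatrix

theorem val_finRotate {n : ℕ} (i : Fin n) : (finRotate n i : ℕ) = (i + 1) % n := by
  obtain ⟨m, rfl⟩ := Nat.exists_eq_succ_of_ne_zero i.pos.ne'
  rw [coe_finRotate]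
  split_ifs with h
  · simp [h]
  · exact (Nat.mod_eq_of_lt (Nat.succ_lt_succ (Fin.val_lt_last h))).symm

theorem Equiv.Perm.IsCycle.apply_apply_ne {α : Type*} [Fintype α] [DecidableEq α] {c : Perm α}
    (hc : c.IsCycle) (hcard : 2 < c.support.card) {i : α} (hi : c i ≠ i) : c (c i) ≠ i := by
  intro hback
  have hsq : c ^ 2 = 1 := hc.pow_eq_one_iff.mpr ⟨i, hi, by rwa [sq, Perm.mul_apply]⟩
  have := Nat.le_of_dvd two_pos (orderOf_dvd_of_pow_eq_one hsq)
  rw [hc.orderOf] at this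
  omega

theorem cycAdj_eq_permMatrix_add_transpose {n : ℕ} (hn : 2 < n) :
    cycAdj n = (finRotate n).permMatrix ℝ + ((finRotate n).permMatrix ℝ)ᵀ := by
  have hsupp : (finRotate n).support = Finset.univ := support_finRotate_of_le hn.le
  have hnot : ∀ i j, ¬(finRotate n i = j ∧ finRotate n j = i) := by
    rintro i j ⟨rfl, hback⟩
    refine (isCycle_finRotate_of_le hn.le).apply_apply_ne ?_ ?_ hback
    · simpa [hsupp] using hn
    · exact Perm.mem_support.mp (hsupp ▸ Finset.mem_univ i)
  have hP : ∀ a b, (finRotate n).permMatrix ℝ a b = if finRotate n a = b then 1 else 0 := by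
    simp only [PEquiv.toMatrix_apply, toPEquiv_apply, Option.mem_def, Option.some_inj,
      implies_true]
  ext i j
  simp only [cycAdj, Matrix.add_apply, transpose_apply, hP, ← val_finRotate, Fin.val_inj]
  by_cases h1 : finRotate n i = j <;> by_cases h2 : finRotate n j = i
  · exact absurd ⟨h1, h2⟩ (hnot i j)
  all_goals simp [h1, h2, -finRotate_apply]

/-- For the cycle graph `C_n` (`n > 2`), `det Δ(s) = s^{2n} − 2sⁿ + 1 = (sⁿ − 1)²`. -/
theorem cycle_defLap_det (n : ℕ) (hn : 2 < n) (s : ℝ) :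
    (defLap (cycAdj n) s).det = s ^ (2 * n) - 2 * s ^ n + 1 ∧
    (defLap (cycAdj n) s).det = (s ^ n - 1) ^ 2 := by
  have hdet : (defLap (cycAdj n) s).det = (1 - s ^ n) ^ 2 := by
    rw [cycAdj_eq_permMatrix_add_transpose hn, det_defLap_permMatrix_add_transpose,
      det_one_sub_smul_permMatrix_of_isCycle (isCycle_finRotate_of_le hn.le)
        (support_finRotate_of_le hn.le), Fintype.card_fin]
  constructor <;> rw [hdet] <;> ring
end

section
/- Let Q_m be the m-cube (hypercube) graph with m ≥ 3 (so n = 2^m > 4 vertices), and Δ(s) = s²(D − I) − sA + I its deformed Laplacian. Then Δ(s) is positive definite for every real s with |s| > 1 or |s| < 1/(m−1), and for every real s with 1/(m−1) < |s| < 1 there exists a vector v with vᵀΔ(s)v < 0 (so the system ẋ = −Δ(s)x is asymptotically stable in the first case and unstable in the second). -/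
/-!
`Q_m` is `m`-regular, so `Δ(s) = ((m−1)s² + 1) I − s A`. Since `A` is symmetric and nonnegative
with row sums `m`, `|vᵀ A v| ≤ m ‖v‖²`, with equality for the all-ones vector (eigenvalue `m`)
and the parity vector `(−1)^|x|` (eigenvalue `−m`). Hence the least value of `vᵀ Δ(s) v / ‖v‖²`
is `(m−1)s² + 1 − m|s| = ((m−1)|s| − 1)(|s| − 1)`, whose sign decides both claims.
-/

open Matrix Filter

/-- Adjacency matrix of the `m`-cube (hypercube) graph `Q_m`, with vertex set
`{0,1}^m` (functions `Fin m → ZMod 2`), two vertices adjacent iff they differ in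
exactly one coordinate. -/
noncomputable def cubeAdj (m : ℕ) : Matrix (Fin m → ZMod 2) (Fin m → ZMod 2) ℝ :=
  fun x y => if (Finset.univ.filter fun i => x i ≠ y i).card = 1 then 1 else 0

lemma dotProduct_self_pos {V : Type} [Fintype V] {v : V → ℝ} (hv : v ≠ 0) : 0 < v ⬝ᵥ v := by
  simpa using dotProduct_star_self_pos_iff.mpr hv

section RowSum

variable {V : Type} [Fintype V] {A : Matrix V V ℝ} {d : ℝ}

lemma abs_dotProduct_mulVec_le (hsymm : A.IsSymm) (hnonneg : ∀ i j, 0 ≤ A i j)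
    (hA : ∀ i, ∑ j, A i j ≤ d) (v : V → ℝ) : |v ⬝ᵥ (A *ᵥ v)| ≤ d * (v ⬝ᵥ v) := by
  have hterm : ∀ i j, |v i * (A i j * v j)| ≤ (A i j * v i ^ 2 + A j i * v j ^ 2) / 2 := by
    intro i j
    rw [show A j i = A i j from congrFun (congrFun hsymm i) j, abs_mul, abs_mul,
      abs_of_nonneg (hnonneg i j)]
    nlinarith [hnonneg i j, two_mul_le_add_sq |v i| |v j|, sq_abs (v i), sq_abs (v j)]
  calc |v ⬝ᵥ (A *ᵥ v)| ≤ ∑ i, ∑ j, |v i * (A i j * v j)| := by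
        simp only [dotProduct, mulVec, Finset.mul_sum]
        exact (Finset.abs_sum_le_sum_abs _ _).trans
          (Finset.sum_le_sum fun i _ => Finset.abs_sum_le_sum_abs _ _)
    _ ≤ ∑ i, ∑ j, (A i j * v i ^ 2 + A j i * v j ^ 2) / 2 :=
        Finset.sum_le_sum fun i _ => Finset.sum_le_sum fun j _ => hterm i j
    _ = ∑ i, (∑ j, A i j) * v i ^ 2 := by
        simp only [add_div, Finset.sum_add_distrib,
          Finset.sum_comm (f := fun (i j : V) => A j i * v j ^ 2 / 2)]
        simp only [← Finset.sum_div, ← Finset.sum_mul]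
        ring
    _ ≤ ∑ i, d * v i ^ 2 :=
        Finset.sum_le_sum fun i _ => mul_le_mul_of_nonneg_right (hA i) (sq_nonneg _)
    _ = d * (v ⬝ᵥ v) := by simp only [dotProduct, Finset.mul_sum, sq]

variable [DecidableEq V]

lemma degMat_eq_smul_one (hA : ∀ i, ∑ j, A i j = d) : degMat A = d • 1 := by
  rw [degMat, smul_one_eq_diagonal, funext hA]

lemma isHermitian_defLap (hsymm : A.IsSymm) (s : ℝ) : (defLap A s).IsHermitian := by
  have hA : A.IsHermitian := isHermitian_iff_isSymm.mpr hsymm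
  exact (((isHermitian_diagonal _).sub isHermitian_one).smul (IsSelfAdjoint.all _)).sub
    (hA.smul (IsSelfAdjoint.all _)) |>.add isHermitian_one

lemma dotProduct_defLap_mulVec (hA : ∀ i, ∑ j, A i j = d) (s : ℝ) (v : V → ℝ) :
    v ⬝ᵥ (defLap A s *ᵥ v) = ((d - 1) * s ^ 2 + 1) * (v ⬝ᵥ v) - s * (v ⬝ᵥ (A *ᵥ v)) := by
  simp only [defLap, degMat_eq_smul_one hA, add_mulVec, sub_mulVec, smul_mulVec, one_mulVec,
    dotProduct_add, dotProduct_sub, dotProduct_smul, smul_eq_mul]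
  ring

lemma mul_dotProduct_self_le_dotProduct_defLap_mulVec (hsymm : A.IsSymm)
    (hnonneg : ∀ i j, 0 ≤ A i j) (hA : ∀ i, ∑ j, A i j = d) (s : ℝ) (v : V → ℝ) :
    ((d - 1) * |s| - 1) * (|s| - 1) * (v ⬝ᵥ v) ≤ v ⬝ᵥ (defLap A s *ᵥ v) := by
  have hbound : s * (v ⬝ᵥ (A *ᵥ v)) ≤ |s| * (d * (v ⬝ᵥ v)) :=
    (le_abs_self _).trans <| (abs_mul _ _).trans_le <| mul_le_mul_of_nonneg_left
      (abs_dotProduct_mulVec_le hsymm hnonneg (fun i => (hA i).le) v) (abs_nonneg s)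
  rw [dotProduct_defLap_mulVec hA, ← sq_abs s]
  linarith

lemma posDef_defLap (hsymm : A.IsSymm) (hnonneg : ∀ i j, 0 ≤ A i j)
    (hA : ∀ i, ∑ j, A i j = d) {s : ℝ} (hs : 0 < ((d - 1) * |s| - 1) * (|s| - 1)) :
    (defLap A s).PosDef :=
  .of_dotProduct_mulVec_pos (isHermitian_defLap hsymm s) fun v hv => by
    simpa using (mul_pos hs (dotProduct_self_pos hv)).trans_le
      (mul_dotProduct_self_le_dotProduct_defLap_mulVec hsymm hnonneg hA s v)

lemma dotProduct_defLap_mulVec_of_mulVec_eq_smul (hA : ∀ i, ∑ j, A i j = d) {s μ : ℝ}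
    {u : V → ℝ} (hu : A *ᵥ u = μ • u) (hμ : s * μ = d * |s|) :
    u ⬝ᵥ (defLap A s *ᵥ u) = ((d - 1) * |s| - 1) * (|s| - 1) * (u ⬝ᵥ u) := by
  rw [dotProduct_defLap_mulVec hA, hu, dotProduct_smul, smul_eq_mul, ← mul_assoc, hμ, ← sq_abs s]
  ring

end RowSum

section Hypercube

variable {m : ℕ}

lemma cubeAdj_isSymm (m : ℕ) : (cubeAdj m).IsSymm := by
  ext x y
  exact congrArg (fun k => if k = 1 then (1 : ℝ) else 0) (hammingDist_comm y x)

lemma cubeAdj_nonneg (x y : Fin m → ZMod 2) : 0 ≤ cubeAdj m x y := by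
  unfold cubeAdj
  split <;> norm_num

lemma filter_ne_add_single (x : Fin m → ZMod 2) (i : Fin m) :
    (Finset.univ.filter fun j => x j ≠ (x + Pi.single i 1 : Fin m → ZMod 2) j) = {i} := by
  ext j
  rcases eq_or_ne j i with rfl | hj <;> simp [*]

lemma card_filter_ne_eq_one_iff {x y : Fin m → ZMod 2} :
    (Finset.univ.filter fun j => x j ≠ y j).card = 1 ↔ ∃ i, y = x + Pi.single i 1 := by
  constructor
  · intro h
    obtain ⟨i, hi⟩ := Finset.card_eq_one.mp h
    refine ⟨i, funext fun j => ?_⟩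
    have hj := Finset.ext_iff.mp hi j
    simp only [Finset.mem_filter, Finset.mem_univ, true_and, Finset.mem_singleton] at hj
    rcases eq_or_ne j i with rfl | hji
    · simpa using ((by decide : ∀ a b : ZMod 2, a ≠ b → b = a + 1) _ _ (hj.mpr rfl))
    · simpa [hji] using (not_not.mp (mt hj.mp hji)).symm
  · rintro ⟨i, rfl⟩
    rw [filter_ne_add_single, Finset.card_singleton]

lemma add_single_injective (x : Fin m → ZMod 2) :
    Function.Injective fun i : Fin m => x + Pi.single i 1 := by
  intro i j h
  by_contra hij
  simpa [hij] using congrFun h i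

lemma cubeAdj_mulVec_apply (f : (Fin m → ZMod 2) → ℝ) (x : Fin m → ZMod 2) :
    (cubeAdj m *ᵥ f) x = ∑ i, f (x + Pi.single i 1) := by
  have hnbr : (Finset.univ.filter fun y => (Finset.univ.filter fun j => x j ≠ y j).card = 1)
      = Finset.univ.image fun i => x + Pi.single i 1 := by
    ext y
    simp only [Finset.mem_filter, Finset.mem_univ, true_and, card_filter_ne_eq_one_iff,
      Finset.mem_image]
    exact exists_congr fun i => eq_comm
  simp only [mulVec, dotProduct, cubeAdj, ite_mul, one_mul, zero_mul, Finset.sum_ite,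
    Finset.sum_const_zero, add_zero, hnbr,
    Finset.sum_image fun i _ j _ h => add_single_injective x h]

lemma cubeAdj_rowSum (x : Fin m → ZMod 2) : ∑ y, cubeAdj m x y = m := by
  simpa [mulVec, dotProduct] using cubeAdj_mulVec_apply (fun _ => 1) x

def cubeParity (x : Fin m → ZMod 2) : ℝ := (-1) ^ (∑ i, x i).val

lemma cubeParity_add_single (x : Fin m → ZMod 2) (i : Fin m) :
    cubeParity (x + Pi.single i 1) = -cubeParity x := by
  have hsum : ∑ j, (x + Pi.single i 1 : Fin m → ZMod 2) j = ∑ j, x j + 1 := by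
    simp [Finset.sum_add_distrib]
  rw [cubeParity, cubeParity, hsum]
  generalize ∑ j, x j = a
  rw [ZMod.val_add, ZMod.val_one]
  have := ZMod.val_lt a
  interval_cases a.val <;> norm_num

lemma cubeAdj_mulVec_cubeParity : cubeAdj m *ᵥ cubeParity = (-(m : ℝ)) • cubeParity := by
  ext x
  simp [cubeAdj_mulVec_apply, cubeParity_add_single]

lemma exists_cubeAdj_eigenvector {s : ℝ} (hs : s ≠ 0) :
    ∃ (u : (Fin m → ZMod 2) → ℝ) (μ : ℝ), u ≠ 0 ∧ cubeAdj m *ᵥ u = μ • u ∧ s * μ = m * |s| := by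
  rcases hs.lt_or_gt with hneg | hpos
  · refine ⟨cubeParity, -m, fun h => ?_, cubeAdj_mulVec_cubeParity, ?_⟩
    · simpa [cubeParity] using congrFun h 0
    · rw [abs_of_neg hneg]; ring
  · refine ⟨fun _ => 1, m, fun h => by simpa using congrFun h 0, funext fun x => ?_, ?_⟩
    · simp [cubeAdj_mulVec_apply]
    · rw [abs_of_pos hpos]; ring

end Hypercube

/-- For the hypercube `Q_m` (`m ≥ 3`, so `n = 2^m > 4` vertices): `Δ(s)` is positive
definite for `|s| > 1` or `|s| < 1/(m−1)`, and for `1/(m−1) < |s| < 1` there is `v`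
with `vᵀ Δ(s) v < 0`. -/
theorem hypercube_defLap_stability (m : ℕ) (hm : 3 ≤ m) (s : ℝ) :
    ((1 < |s| ∨ |s| < 1 / ((m : ℝ) - 1)) → (defLap (cubeAdj m) s).PosDef) ∧
    (1 / ((m : ℝ) - 1) < |s| → |s| < 1 →
      ∃ v : (Fin m → ZMod 2) → ℝ, v ⬝ᵥ (defLap (cubeAdj m) s *ᵥ v) < 0) := by
  have hm' : (2 : ℝ) ≤ (m : ℝ) - 1 := by
    have : (3 : ℝ) ≤ m := by exact_mod_cast hm
    linarith
  have hd : (0 : ℝ) < (m : ℝ) - 1 := by linarith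
  refine ⟨fun hs => posDef_defLap (cubeAdj_isSymm m) cubeAdj_nonneg cubeAdj_rowSum ?_,
    fun hlow hhigh => ?_⟩
  · rcases hs with hs | hs
    · exact mul_pos (by nlinarith) (by linarith)
    · have hsd : |s| * ((m : ℝ) - 1) < 1 := (lt_div_iff₀ hd).mp hs
      exact mul_pos_of_neg_of_neg (by linarith) (by nlinarith [abs_nonneg s])
  · have hsd : 1 < |s| * ((m : ℝ) - 1) := (div_lt_iff₀ hd).mp hlow
    obtain ⟨u, μ, hu0, hu, hμ⟩ := exists_cubeAdj_eigenvector (s := s) (m := m)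
      (by rintro rfl; norm_num at hsd)
    refine ⟨u, ?_⟩
    rw [dotProduct_defLap_mulVec_of_mulVec_eq_smul cubeAdj_rowSum hu hμ]
    exact mul_neg_of_neg_of_pos (mul_neg_of_pos_of_neg (by linarith) (by linarith))
      (dotProduct_self_pos hu0)
end
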